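/- The function f_0(x,y) = max(0, rank x + rank y − max(rank P, rank Q)) is the least element of the lattice of quilts of type (P,Q): it is a quilt, and every quilt f satisfies f(x,y) ≥ f_0(x,y) for all x ∈ P, y ∈ Q. -/

import Mathlib

/-- A quilt of alternating sign matrices of type `(P, Q)`, with respect to given rank
functions `rkP`, `rkQ`: a map `f : P × Q → ℕ` vanishing when either coordinate is the
least element, taking the value `min (rank P) (rank Q)` at `(⊤, ⊤)`, and satisfying
Boolean growth along each cover relation of the product poset `P × Q`. -/
def IsQuilt {P Q : Type*} [PartialOrder P] [BoundedOrder P] [PartialOrder Q] [BoundedOrder Q]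
    (rkP : P → ℕ) (rkQ : Q → ℕ) (f : P → Q → ℕ) : Prop :=
  (∀ y, f ⊥ y = 0) ∧
  (∀ x, f x ⊥ = 0) ∧
  f ⊤ ⊤ = min (rkP ⊤) (rkQ ⊤) ∧
  (∀ a b : P × Q, a ⋖ b → f b.1 b.2 = f a.1 a.2 ∨ f b.1 b.2 = f a.1 a.2 + 1)

/-!
Along a saturated chain from `a` up to `b`, the rank grows by exactly one at each step while a
quilt grows by at most one, so `f b - f a ≤ rk b - rk a`. Taking `b = (⊤, ⊤)` in `P × Q` with
rank `rkP x + rkQ y` gives `f x y ≥ rkP x + rkQ y - (rkP ⊤ + rkQ ⊤ - min (rkP ⊤) (rkQ ⊤))`,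
and the subtracted quantity is `max (rkP ⊤) (rkQ ⊤)`.
-/

section RankFunction

variable {α : Type*} [PartialOrder α] [IsStronglyAtomic α] [WellFoundedGT α] {r : α → ℕ}

theorem add_le_add_of_le_of_covBy (hr : ∀ a b : α, a ⋖ b → r b = r a + 1) {g : α → ℕ}
    (hg : ∀ a b : α, a ⋖ b → g b ≤ g a + 1) {a b : α} (hab : a ≤ b) :
    g b + r a ≤ g a + r b := by
  induction a using WellFoundedGT.induction with
  | _ a ih =>
    rcases hab.eq_or_lt with rfl | hlt
    · rfl
    · obtain ⟨c, hac, hcb⟩ := exists_covBy_le_of_lt hlt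
      have h_above := ih c hac.lt hcb
      have hr_step := hr a c hac
      have hg_step := hg a c hac
      omega

theorem monotone_of_covBy_eq_add_one (hr : ∀ a b : α, a ⋖ b → r b = r a + 1) : Monotone r :=
  fun _ _ hab => by simpa using add_le_add_of_le_of_covBy hr (g := 0) (by simp) hab

end RankFunction

theorem Prod.add_covBy_eq_add_one {P Q : Type*} [PartialOrder P] [PartialOrder Q]
    {rkP : P → ℕ} {rkQ : Q → ℕ} (hP : ∀ x y : P, x ⋖ y → rkP y = rkP x + 1)
    (hQ : ∀ x y : Q, x ⋖ y → rkQ y = rkQ x + 1) (a b : P × Q) (hab : a ⋖ b) :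
    rkP b.1 + rkQ b.2 = rkP a.1 + rkQ a.2 + 1 := by
  rcases Prod.covBy_iff.1 hab with ⟨h, he⟩ | ⟨h, he⟩
  · rw [← he, hP _ _ h]; ring
  · rw [← he, hQ _ _ h]; ring

section Quilt

variable {P Q : Type*} [PartialOrder P] [BoundedOrder P] [PartialOrder Q] [BoundedOrder Q]
  {rkP : P → ℕ} {rkQ : Q → ℕ}

variable [Finite P] [Finite Q]

theorem isQuilt_add_sub_max (hP0 : rkP ⊥ = 0) (hP : ∀ x y : P, x ⋖ y → rkP y = rkP x + 1)
    (hQ0 : rkQ ⊥ = 0) (hQ : ∀ x y : Q, x ⋖ y → rkQ y = rkQ x + 1) :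
    IsQuilt rkP rkQ (fun x y => rkP x + rkQ y - max (rkP ⊤) (rkQ ⊤)) := by
  have hPtop (x : P) : rkP x ≤ rkP ⊤ := monotone_of_covBy_eq_add_one hP le_top
  have hQtop (y : Q) : rkQ y ≤ rkQ ⊤ := monotone_of_covBy_eq_add_one hQ le_top
  refine ⟨fun y => ?_, fun x => ?_, by dsimp only; omega, fun a b hab => ?_⟩ <;> dsimp only
  · have := hQtop y; omega
  · have := hPtop x; omega
  · have := Prod.add_covBy_eq_add_one hP hQ a b hab; omega

theorem IsQuilt.add_sub_max_le {f : P → Q → ℕ} (hf : IsQuilt rkP rkQ f)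
    (hP : ∀ x y : P, x ⋖ y → rkP y = rkP x + 1) (hQ : ∀ x y : Q, x ⋖ y → rkQ y = rkQ x + 1)
    (x : P) (y : Q) : rkP x + rkQ y - max (rkP ⊤) (rkQ ⊤) ≤ f x y := by
  obtain ⟨-, -, htop, hgrowth⟩ := hf
  have := add_le_add_of_le_of_covBy (Prod.add_covBy_eq_add_one hP hQ)
    (g := fun a => f a.1 a.2) (fun a b hab => by rcases hgrowth a b hab with h | h <;> omega)
    (le_top : (x, y) ≤ ⊤)
  simp only [Prod.fst_top, Prod.snd_top, htop] at this
  omega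

end Quilt

/-- The function `f₀(x, y) = max 0 (rank x + rank y - max (rank P) (rank Q))` (here
expressed with truncated subtraction on `ℕ`) is the least element of the lattice of
quilts of type `(P, Q)`: it is a quilt, and every quilt lies pointwise above it. -/
theorem quilt_bottom_element
    {P Q : Type*} [Fintype P] [PartialOrder P] [BoundedOrder P]
    [Fintype Q] [PartialOrder Q] [BoundedOrder Q]
    (rkP : P → ℕ) (rkQ : Q → ℕ)
    (hP0 : rkP ⊥ = 0) (hPcov : ∀ x y : P, x ⋖ y → rkP y = rkP x + 1)
    (hQ0 : rkQ ⊥ = 0) (hQcov : ∀ x y : Q, x ⋖ y → rkQ y = rkQ x + 1) :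
    IsQuilt rkP rkQ (fun x y => rkP x + rkQ y - max (rkP ⊤) (rkQ ⊤)) ∧
    (∀ f : P → Q → ℕ, IsQuilt rkP rkQ f → ∀ (x : P) (y : Q),
      rkP x + rkQ y - max (rkP ⊤) (rkQ ⊤) ≤ f x y) :=
  ⟨isQuilt_add_sub_max hP0 hPcov hQ0 hQcov, fun _ hf => hf.add_sub_max_le hPcov hQcov⟩
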